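/- arXiv:1811.03440 — 3 statements merged into one kernel-verified Lean document; each statement's English description precedes it below -/
import Mathlib

section
/- For all integers n and k with 1 ≤ k < n, the partition statistic satisfies the recurrence b(n, k) = (1/k) · Σ_{i=1}^{k} b(n−k, i). -/
open Filter Real Topology

open scoped Classical in
/-- `partitionStat n k` is the sum of `1/wλ` over all partitions `λ` of `n` whose
largest part equals `k`, where `wλ` is the product of the parts of `λ`. -/
noncomputable def partitionStat (n k : ℕ) : ℝ :=
  ∑ p ∈ Finset.univ.filter
      (fun p : Nat.Partition n => k ∈ p.parts ∧ ∀ i ∈ p.parts, i ≤ k),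
    1 / (p.parts.prod : ℝ)

theorem partitionStat_recurrence (n k : ℕ) (hk : 1 ≤ k) (hkn : k < n) :
    partitionStat n k = (1 / (k : ℝ)) * ∑ i ∈ Finset.Icc 1 k, partitionStat (n - k) i := by
  classical
  have hk0 : (k : ℝ) ≠ 0 := by
    exact_mod_cast (Nat.pos_of_ne_zero (by omega)).ne'
  have hnk : 0 < n - k := Nat.sub_pos_of_lt hkn
  set A : ℕ → Finset (Nat.Partition (n - k)) := fun i =>
    Finset.univ.filter (fun q : Nat.Partition (n - k) => i ∈ q.parts ∧ ∀ j ∈ q.parts, j ≤ i)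
    with hA
  have h1 : ∑ i ∈ Finset.Icc 1 k, partitionStat (n - k) i
      = ∑ q ∈ Finset.univ.filter
          (fun q : Nat.Partition (n - k) => ∀ j ∈ q.parts, j ≤ k),
          1 / (q.parts.prod : ℝ) := by
    have hdisj : (↑(Finset.Icc 1 k) : Set ℕ).PairwiseDisjoint A := by
      intro i _ j _ hij
      simp only [Finset.disjoint_left, hA, Finset.mem_filter]
      rintro q ⟨_, hiq, hlei⟩ ⟨_, hjq, hlej⟩
      exact hij (le_antisymm (hlej i hiq) (hlei j hjq))
    have : ∑ i ∈ Finset.Icc 1 k, partitionStat (n - k) i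
        = ∑ q ∈ (Finset.Icc 1 k).biUnion A, 1 / (q.parts.prod : ℝ) := by
      rw [Finset.sum_biUnion hdisj]
      rfl
    rw [this]
    congr 1
    ext q
    simp only [Finset.mem_biUnion, Finset.mem_filter, Finset.mem_univ, true_and,
      Finset.mem_Icc, hA]
    constructor
    · rintro ⟨i, ⟨_, hik⟩, _, hle⟩ j hj
      exact (hle j hj).trans hik
    · intro hle
      have hne : q.parts ≠ 0 := by
        intro h0
        have := q.parts_sum
        rw [h0] at this
        simp at this
        omega
      have hfin : q.parts.toFinset.Nonempty := Multiset.toFinset_nonempty.mpr hne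
      set i := q.parts.toFinset.max' hfin with hi
      have him : i ∈ q.parts := Multiset.mem_toFinset.mp (q.parts.toFinset.max'_mem hfin)
      refine ⟨i, ⟨q.parts_pos him, hle i him⟩, him, fun j hj => ?_⟩
      exact q.parts.toFinset.le_max' j (Multiset.mem_toFinset.mpr hj)
  rw [h1, Finset.mul_sum]
  unfold partitionStat
  symm
  refine Finset.sum_bij
    (fun q _ => (⟨k ::ₘ q.parts,
      fun {j} hj => (Multiset.mem_cons.mp hj).elim (fun h => by omega) (fun h => q.parts_pos h),
      by rw [Multiset.sum_cons, q.parts_sum]; omega⟩ : Nat.Partition n))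
    ?_ ?_ ?_ ?_
  · intro q hq
    simp only [Finset.mem_filter, Finset.mem_univ, true_and]
    refine ⟨Multiset.mem_cons_self k _, fun i hi => ?_⟩
    rcases Multiset.mem_cons.mp hi with h | h
    · omega
    · exact (Finset.mem_filter.mp hq).2 i h
  · intro q1 h1 q2 h2 heq
    have : k ::ₘ q1.parts = k ::ₘ q2.parts := congrArg Nat.Partition.parts heq
    exact Nat.Partition.ext ((Multiset.cons_inj_right k).mp this)
  · intro p hp
    have hkp : k ∈ p.parts := (Finset.mem_filter.mp hp).2.1
    have hsum : (p.parts.erase k).sum = n - k := by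
      have := Multiset.sum_erase hkp
      have hs := p.parts_sum
      omega
    refine ⟨⟨p.parts.erase k,
        fun {j} hj => p.parts_pos (Multiset.mem_of_mem_erase hj), hsum⟩, ?_, ?_⟩
    · simp only [Finset.mem_filter, Finset.mem_univ, true_and]
      intro j hj
      exact (Finset.mem_filter.mp hp).2.2 j (Multiset.mem_of_mem_erase hj)
    · exact Nat.Partition.ext (Multiset.cons_erase hkp)
  · intro q hq
    have hprod : ((k ::ₘ q.parts).prod : ℕ) = k * q.parts.prod := Multiset.prod_cons k q.parts
    rw [hprod]
    push_cast
    field_simp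
end

section
/- Let F : (0,1] → ℝ be defined by F(x) = lim_{n → ∞} e^{γ} b(n, ⌊xn⌋) (this limit exists for every x ∈ (0,1]). Then for every x ∈ (0, 1/2) that is not of the form 1/m for an integer m, the function u ↦ (u/(1−u))·F(u) is differentiable at x with derivative equal to F(x/(1−x)) / (1−x)². -/
/-!
Removing one copy of the largest part `k` from a partition of `n` gives, for `k < n`,
`k b(n,k) = ∑_{t ≤ k} b(n-k, t)`. For `k = ⌊un⌋` and `M = n - k`, the right-hand side divided
by `M` is a Riemann sum of the step function `y ↦ b(M, ⌊yM⌋)`, which tends to `F` on `(0,1]` and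
vanishes eventually beyond `1`. Since `0 ≤ b ≤ 1`, dominated convergence turns the recurrence
into the integral equation `u/(1-u) F(u) = ∫₀^{u/(1-u)} G` for `u ∈ (0,1)`, where `G` is `F`
on `(0,1]` and `0` elsewhere. The equation shows that `F` is continuous on `(0,1)`, so the
fundamental theorem of calculus differentiates it at `x < 1/2`, where `x/(1-x) < 1`.
-/

open Filter Real Topology

section Combinatorics

open Finset

theorem partitionStat_nonneg (n k : ℕ) : 0 ≤ partitionStat n k :=
  sum_nonneg fun _ _ => by positivity

theorem partitionStat_eq_zero_of_lt {n k : ℕ} (h : n < k) : partitionStat n k = 0 :=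
  sum_eq_zero fun p hp => absurd (p.le_of_mem_parts (mem_filter.1 hp).2.1) h.not_ge

theorem partitionStat_zero_right (n : ℕ) : partitionStat n 0 = 0 :=
  sum_eq_zero fun p hp => absurd (p.parts_pos (mem_filter.1 hp).2.1) (lt_irrefl 0)

theorem Multiset.sup_mem_of_ne_zero {α : Type*} [LinearOrder α] [OrderBot α] {s : Multiset α}
    (hs : s ≠ 0) : s.sup ∈ s := by
  induction s using Multiset.induction_on with
  | empty => exact absurd rfl hs
  | cons a s ih =>
    rw [Multiset.sup_cons]
    rcases eq_or_ne s 0 with rfl | hs'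
    · simp
    · rcases max_choice a s.sup with h | h <;> rw [h] <;> simp [ih hs']

theorem Nat.Partition.mem_parts_and_forall_le_iff {n : ℕ} (p : n.Partition) (hn : n ≠ 0)
    (k : ℕ) :
    (k ∈ p.parts ∧ ∀ i ∈ p.parts, i ≤ k) ↔ p.parts.sup = k := by
  have hne : p.parts ≠ 0 := fun h => hn (by simpa [h] using p.parts_sum.symm)
  refine ⟨fun ⟨hk, hle⟩ => le_antisymm (Multiset.sup_le.2 hle) (Multiset.le_sup hk), ?_⟩
  rintro rfl
  exact ⟨Multiset.sup_mem_of_ne_zero hne, fun i => Multiset.le_sup⟩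

noncomputable def partitionStatLE (r j : ℕ) : ℝ :=
  ∑ q ∈ Nat.Partition.restricted r (· ≤ j), 1 / (q.parts.prod : ℝ)

theorem partitionStatLE_zero_left (j : ℕ) : partitionStatLE 0 j = 1 := by
  rw [partitionStatLE, Nat.Partition.restricted, filter_true_of_mem (by simp), univ_unique,
    sum_singleton, Nat.Partition.partition_zero_parts]
  simp

theorem partitionStatLE_eq_sum {r : ℕ} (hr : r ≠ 0) (j : ℕ) :
    partitionStatLE r j = ∑ t ∈ range (j + 1), partitionStat r t := by
  rw [partitionStatLE, ← sum_fiberwise_of_maps_to (g := fun q : r.Partition => q.parts.sup)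
    (t := range (j + 1))]
  · refine sum_congr rfl fun t ht => ?_
    rw [partitionStat, Nat.Partition.restricted, filter_filter]
    refine sum_congr (filter_congr fun p _ => ?_) fun _ _ => rfl
    rw [p.mem_parts_and_forall_le_iff hr, ← Multiset.sup_le, and_iff_right_iff_imp]
    rintro rfl
    exact Nat.lt_succ_iff.1 (mem_range.1 ht)
  · intro q hq
    exact mem_range.2 (Nat.lt_succ_of_le (Multiset.sup_le.2 (mem_filter.1 hq).2))

theorem natCast_mul_partitionStat {n j : ℕ} (hj : 1 ≤ j) (hjn : j ≤ n) :
    (j : ℝ) * partitionStat n j = partitionStatLE (n - j) j := by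
  let e := Nat.Partition.partitionWithPartEquiv hj hjn
  rw [partitionStat, partitionStatLE, mul_sum]
  refine sum_bij' (fun p hp => e ⟨p, (mem_filter.1 hp).2.1⟩) (fun q _ => (e.symm q).1)
    ?_ ?_ ?_ ?_ ?_
  · intro p hp
    simp only [Nat.Partition.restricted, mem_filter, mem_univ, true_and] at hp ⊢
    simpa [e] using fun i hi => hp.2 i (Multiset.mem_of_mem_erase hi)
  · intro q hq
    simp only [Nat.Partition.restricted, mem_filter, mem_univ, true_and] at hq ⊢
    simp only [e, Nat.Partition.partitionWithPartEquiv_symm_apply_parts, Multiset.mem_cons,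
      true_or, true_and]
    rintro i (rfl | hi) <;> [rfl; exact hq i hi]
  · intro p _
    simp [e]
  · intro q _
    simp [e]
  · intro p hp
    have hmem := (mem_filter.1 hp).2.1
    simp only [e, Nat.Partition.partitionWithPartEquiv_apply_parts]
    rw [← Multiset.prod_erase hmem]
    have : (j : ℝ) ≠ 0 := by positivity
    push_cast
    field_simp

theorem natCast_mul_partitionStat_of_lt {n k : ℕ} (hkn : k < n) :
    (k : ℝ) * partitionStat n k = ∑ t ∈ range (k + 1), partitionStat (n - k) t := by
  rcases Nat.eq_zero_or_pos k with rfl | hk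
  · simp [partitionStat_zero_right]
  · rw [natCast_mul_partitionStat hk hkn.le, partitionStatLE_eq_sum (by omega)]

theorem partitionStat_le_one (n k : ℕ) : partitionStat n k ≤ 1 := by
  induction n using Nat.strong_induction_on generalizing k with
  | _ n ih =>
  rcases Nat.eq_zero_or_pos k with rfl | hk
  · simp [partitionStat_zero_right]
  rcases lt_or_ge n k with hnk | hkn
  · simp [partitionStat_eq_zero_of_lt hnk]
  have hLE : partitionStatLE (n - k) k ≤ k := by
    rcases Nat.eq_zero_or_pos (n - k) with h0 | hpos
    · rw [h0, partitionStatLE_zero_left]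
      exact_mod_cast hk
    · rw [partitionStatLE_eq_sum hpos.ne', sum_range_succ', partitionStat_zero_right, add_zero]
      calc _ ≤ ∑ _ ∈ range k, (1 : ℝ) := sum_le_sum fun t _ => ih _ (by omega) _
        _ = k := by simp
  rw [← natCast_mul_partitionStat hk hkn] at hLE
  have hk' : (0 : ℝ) < k := by exact_mod_cast hk
  nlinarith

end Combinatorics

open Set MeasureTheory
open scoped Interval

theorem Nat.floor_mul_eq_of_mem_Ioo {m t : ℕ} (hm : 0 < m) {y : ℝ}
    (hy : y ∈ Ioo ((t : ℝ) / m) ((t + 1 : ℕ) / m)) : ⌊y * m⌋₊ = t := by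
  have hm' : (0 : ℝ) < m := by exact_mod_cast hm
  obtain ⟨hlo, hhi⟩ := hy
  rw [div_lt_iff₀ hm'] at hlo
  rw [lt_div_iff₀ hm', Nat.cast_succ] at hhi
  exact (Nat.floor_eq_iff ((Nat.cast_nonneg t).trans hlo.le)).2 ⟨hlo.le, hhi⟩

theorem integral_comp_floor_mul (g : ℕ → ℝ) {m : ℕ} (hm : 0 < m) (N : ℕ) :
    ∫ y in (0 : ℝ)..N / m, g ⌊y * m⌋₊ = (∑ t ∈ Finset.range N, g t) / m := by
  have hle (t : ℕ) : (t : ℝ) / m ≤ (t + 1 : ℕ) / m := by gcongr; simp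
  have hconst (t : ℕ) : EqOn (fun y : ℝ => g ⌊y * m⌋₊) (fun _ => g t)
      (Ioo ((t : ℝ) / m) ((t + 1 : ℕ) / m)) := fun y hy => by
    simp only [Nat.floor_mul_eq_of_mem_Ioo hm hy]
  have hint (t : ℕ) :
      IntervalIntegrable (fun y : ℝ => g ⌊y * m⌋₊) volume (t / m) ((t + 1 : ℕ) / m) :=
    intervalIntegrable_const.congr_uIoo (uIoo_of_le (hle t) ▸ (hconst t).symm)
  rw [← zero_div (m : ℝ), ← Nat.cast_zero,
    ← intervalIntegral.sum_integral_adjacent_intervals fun t _ => hint t, Finset.sum_div]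
  refine Finset.sum_congr rfl fun t _ => ?_
  rw [intervalIntegral.integral_congr_Ioo_of_le (hle t) (hconst t),
    intervalIntegral.integral_const, smul_eq_mul, Nat.cast_succ, ← sub_div, add_sub_cancel_left,
    one_div_mul_eq_div]

theorem tendsto_intervalIntegral_of_dominated_of_tendsto_right {ι : Type*}
    {l : Filter ι} [l.IsCountablyGenerated] {f : ι → ℝ → ℝ} {g : ℝ → ℝ} {a b B : ℝ}
    {s : ι → ℝ} (hf_meas : ∀ i, AEStronglyMeasurable (f i))
    (hf_bound : ∀ i y, ‖f i y‖ ≤ B)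
    (hf_lim : ∀ y ∈ Ι a b, Tendsto (fun i => f i y) l (𝓝 (g y)))
    (hs : Tendsto s l (𝓝 b)) :
    Tendsto (fun i => ∫ y in a..s i, f i y) l (𝓝 (∫ y in a..b, g y)) := by
  have hint (i : ι) (c d : ℝ) : IntervalIntegrable (f i) volume c d :=
    intervalIntegrable_const.mono_fun' (hf_meas i).restrict (ae_of_all _ (hf_bound i))
  have hmain : Tendsto (fun i => ∫ y in a..b, f i y) l (𝓝 (∫ y in a..b, g y)) :=
    intervalIntegral.tendsto_integral_filter_of_dominated_convergence (fun _ => B)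
      (Eventually.of_forall fun i => (hf_meas i).restrict)
      (Eventually.of_forall fun i => ae_of_all _ fun y _ => hf_bound i y)
      intervalIntegrable_const (ae_of_all _ hf_lim)
  have htail : Tendsto (fun i => ∫ y in b..s i, f i y) l (𝓝 0) := by
    refine squeeze_zero_norm (fun i =>
      intervalIntegral.norm_integral_le_of_norm_le_const fun y _ => hf_bound i y) ?_
    simpa using ((hs.sub_const b).abs).const_mul B
  simpa using (hmain.add htail).congr fun i =>
    intervalIntegral.integral_add_adjacent_intervals (hint i _ _) (hint i _ _)

theorem norm_mul_partitionStat_le (C : ℝ) (n k : ℕ) :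
    ‖C * partitionStat n k‖ ≤ ‖C‖ := by
  rw [norm_mul, Real.norm_of_nonneg (partitionStat_nonneg n k)]
  exact mul_le_of_le_one_right (norm_nonneg C) (partitionStat_le_one n k)

theorem partitionStat_floor_mul_eventually_eq_zero {y : ℝ} (hy : 1 < y) :
    ∀ᶠ n : ℕ in atTop, partitionStat n ⌊y * n⌋₊ = 0 := by
  have h := (tendsto_natCast_atTop_atTop (R := ℝ)).const_mul_atTop (sub_pos.2 hy)
  filter_upwards [h.eventually_ge_atTop 1] with n hn
  refine partitionStat_eq_zero_of_lt (Nat.le_floor ?_)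
  push_cast
  linarith

theorem natCast_sub_floor_mul {u : ℝ} (hu : u ∈ Icc (0 : ℝ) 1) (n : ℕ) :
    ((n - ⌊u * n⌋₊ : ℕ) : ℝ) = n - ⌊u * n⌋₊ :=
  Nat.cast_sub (Nat.floor_le_of_le (mul_le_of_le_one_left n.cast_nonneg hu.2))

theorem tendsto_sub_floor_mul_atTop {u : ℝ} (hu : u ∈ Ico (0 : ℝ) 1) :
    Tendsto (fun n : ℕ => n - ⌊u * n⌋₊) atTop atTop := by
  rw [← tendsto_natCast_atTop_iff (R := ℝ)]
  refine tendsto_atTop_mono (fun n => ?_)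
    ((tendsto_natCast_atTop_atTop (R := ℝ)).const_mul_atTop (sub_pos.2 hu.2))
  rw [natCast_sub_floor_mul (Ico_subset_Icc_self hu)]
  linarith [Nat.floor_le (mul_nonneg hu.1 n.cast_nonneg)]

theorem tendsto_floor_mul_div_sub_floor_mul {u : ℝ} (hu : u ∈ Ico (0 : ℝ) 1) :
    Tendsto (fun n : ℕ => (⌊u * n⌋₊ : ℝ) / (n - ⌊u * n⌋₊ : ℕ)) atTop
      (𝓝 (u / (1 - u))) := by
  have hk := (tendsto_nat_floor_mul_div_atTop hu.1).comp tendsto_natCast_atTop_atTop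
  have h := hk.div (tendsto_const_nhds.sub hk) (sub_pos.2 hu.2).ne'
  refine h.congr' ?_
  filter_upwards [eventually_gt_atTop 0] with n hn
  have : (n : ℝ) ≠ 0 := by positivity
  show (⌊u * n⌋₊ / n : ℝ) / (1 - ⌊u * n⌋₊ / n) = _
  rw [natCast_sub_floor_mul (Ico_subset_Icc_self hu)]
  field_simp

section LimitFunction

variable {C : ℝ} {F : ℝ → ℝ}
  (hF : ∀ x ∈ Ioc (0 : ℝ) 1,
    Tendsto (fun n : ℕ => C * partitionStat n ⌊x * n⌋₊) atTop (𝓝 (F x)))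
include hF

theorem tendsto_indicator_limit_of_pos {y : ℝ} (hy : 0 < y) :
    Tendsto (fun n : ℕ => C * partitionStat n ⌊y * n⌋₊) atTop
      (𝓝 ((Ioc (0 : ℝ) 1).indicator F y)) := by
  rcases le_or_gt y 1 with hy1 | hy1
  · have hy' : y ∈ Ioc (0 : ℝ) 1 := ⟨hy, hy1⟩
    rw [indicator_of_mem hy']
    exact hF y hy'
  · rw [indicator_of_notMem fun h => hy1.not_ge h.2]
    refine tendsto_const_nhds.congr' ?_
    filter_upwards [partitionStat_floor_mul_eventually_eq_zero hy1] with n hn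
    rw [hn, mul_zero]

theorem integrable_indicator_limit : Integrable ((Ioc (0 : ℝ) 1).indicator F) := by
  refine (integrable_indicator_iff measurableSet_Ioc).2 (Integrable.of_bound ?_ ‖C‖ ?_)
  · refine aestronglyMeasurable_of_tendsto_ae atTop (fun n => ?_)
      ((ae_restrict_iff' measurableSet_Ioc).2 (ae_of_all _ hF))
    exact (Measurable.aestronglyMeasurable (by fun_prop))
  · refine (ae_restrict_iff' measurableSet_Ioc).2 (ae_of_all _ fun x hx => ?_)
    exact le_of_tendsto (hF x hx).norm
      (Eventually.of_forall fun n => norm_mul_partitionStat_le C _ _)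

theorem div_one_sub_mul_limit_eq_integral {u : ℝ} (hu : u ∈ Ioo (0 : ℝ) 1) :
    u / (1 - u) * F u = ∫ y in (0 : ℝ)..u / (1 - u), (Ioc (0 : ℝ) 1).indicator F y := by
  set k : ℕ → ℕ := fun n => ⌊u * n⌋₊
  set M : ℕ → ℕ := fun n => n - k n
  have hM_top : Tendsto M atTop atTop := tendsto_sub_floor_mul_atTop ⟨hu.1.le, hu.2⟩
  have hk_div : Tendsto (fun n => (k n : ℝ) / M n) atTop (𝓝 (u / (1 - u))) :=
    tendsto_floor_mul_div_sub_floor_mul ⟨hu.1.le, hu.2⟩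
  have hk1_div : Tendsto (fun n => ((k n + 1 : ℕ) : ℝ) / M n) atTop (𝓝 (u / (1 - u))) := by
    have h := hk_div.add (tendsto_inv_atTop_zero.comp (tendsto_natCast_atTop_atTop.comp hM_top))
    rw [add_zero] at h
    refine h.congr fun n => ?_
    simp [add_div]
  have hident : ∀ᶠ n in atTop, (k n : ℝ) / M n * (C * partitionStat n (k n)) =
      ∫ y in (0 : ℝ)..(k n + 1 : ℕ) / M n, C * partitionStat (M n) ⌊y * M n⌋₊ := by
    filter_upwards [hM_top.eventually_gt_atTop 0] with n hn
    rw [integral_comp_floor_mul (fun t => C * partitionStat (M n) t) hn, ← Finset.mul_sum,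
      ← natCast_mul_partitionStat_of_lt (Nat.sub_pos_iff_lt.1 hn)]
    ring
  refine tendsto_nhds_unique ((hk_div.mul (hF u ⟨hu.1, hu.2.le⟩)).congr' hident) ?_
  refine tendsto_intervalIntegral_of_dominated_of_tendsto_right
    (fun n => Measurable.aestronglyMeasurable (by fun_prop))
    (fun n y => norm_mul_partitionStat_le C _ _) (fun y hy => ?_) hk1_div
  rw [uIoc_of_le (div_pos hu.1 (sub_pos.2 hu.2)).le] at hy
  exact (tendsto_indicator_limit_of_pos hF hy.1).comp hM_top

theorem continuousAt_limit_of_mem_Ioo {v : ℝ} (hv : v ∈ Ioo (0 : ℝ) 1) :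
    ContinuousAt F v := by
  have hΦ := (integrable_indicator_limit hF).continuous_primitive 0
  have h : ContinuousAt
      (fun u => (1 - u) / u * ∫ y in (0 : ℝ)..u / (1 - u), (Ioc (0 : ℝ) 1).indicator F y)
      v := by
    have : 1 - v ≠ 0 := (sub_pos.2 hv.2).ne'
    have : v ≠ 0 := hv.1.ne'
    fun_prop (disch := assumption)
  refine h.congr (eventually_of_mem (isOpen_Ioo.mem_nhds hv) fun u hu => ?_)
  show (1 - u) / u * _ = F u
  rw [← div_one_sub_mul_limit_eq_integral hF hu]
  have : 1 - u ≠ 0 := (sub_pos.2 hu.2).ne'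
  field_simp [hu.1.ne']

end LimitFunction

theorem deriv_of_limit_function_general (F : ℝ → ℝ)
    (hF : ∀ x ∈ Set.Ioc (0 : ℝ) 1,
      Tendsto
        (fun n : ℕ =>
          Real.exp Real.eulerMascheroniConstant * partitionStat n ⌊x * n⌋₊)
        atTop (𝓝 (F x)))
    (x : ℝ) (hx : x ∈ Set.Ioo (0 : ℝ) (1 / 2)) :
    HasDerivAt (fun u : ℝ => u / (1 - u) * F u)
      (F (x / (1 - x)) / (1 - x) ^ 2) x := by
  obtain ⟨hx0, hx2⟩ := hx
  have hx1 : 0 < 1 - x := by linarith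
  set c := x / (1 - x)
  have hc : c ∈ Ioo (0 : ℝ) 1 := ⟨div_pos hx0 hx1, (div_lt_one hx1).2 (by linarith)⟩
  have hG := integrable_indicator_limit hF
  have hGF : (Ioc (0 : ℝ) 1).indicator F =ᶠ[𝓝 c] F :=
    eventually_of_mem (isOpen_Ioo.mem_nhds hc) fun y hy =>
      indicator_of_mem (Ioo_subset_Ioc_self hy) F
  have hΦ : HasDerivAt (fun y => ∫ t in (0 : ℝ)..y, (Ioc (0 : ℝ) 1).indicator F t)
      (F c) c := by
    simpa [hGF.eq_of_nhds] using intervalIntegral.integral_hasDerivAt_right hG.intervalIntegrable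
      hG.aestronglyMeasurable.stronglyMeasurableAtFilter
      ((continuousAt_limit_of_mem_Ioo hF hc).congr hGF.symm)
  have hq : HasDerivAt (fun u : ℝ => u / (1 - u)) (1 / (1 - x) ^ 2) x := by
    refine ((hasDerivAt_id' x).div ((hasDerivAt_id' x).const_sub 1) hx1.ne').congr_deriv ?_
    ring
  have heq : (fun u : ℝ => u / (1 - u) * F u) =ᶠ[𝓝 x]
      (fun y => ∫ t in (0 : ℝ)..y, (Ioc (0 : ℝ) 1).indicator F t) ∘ fun u => u / (1 - u) :=
    eventually_of_mem (isOpen_Ioo.mem_nhds (⟨hx0, by linarith⟩ : x ∈ Ioo (0 : ℝ) 1))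
      fun u hu => div_one_sub_mul_limit_eq_integral hF hu
  simpa [div_eq_mul_one_div (F c)] using (hΦ.comp x hq).congr_of_eventuallyEq heq

theorem deriv_of_limit_function (F : ℝ → ℝ)
    (hF : ∀ x ∈ Set.Ioc (0 : ℝ) 1,
      Tendsto
        (fun n : ℕ =>
          Real.exp Real.eulerMascheroniConstant * partitionStat n ⌊x * n⌋₊)
        atTop (𝓝 (F x)))
    (x : ℝ) (hx : x ∈ Set.Ioo (0 : ℝ) (1 / 2)) (hm : ∀ m : ℤ, x ≠ 1 / (m : ℝ)) :
    HasDerivAt (fun u : ℝ => u / (1 - u) * F u)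
      (F (x / (1 - x)) / (1 - x) ^ 2) x :=
  deriv_of_limit_function_general F hF x hx
end

section
/- Let s be a positive integer, let x ∈ (0, 1), and let F : ℝ → ℝ be continuous on the closed interval [1/(s+1), 1/s]. Then the Riemann sums converge: lim_{n → ∞} (1/n) · Σ_{i = ⌊(n−⌊xn⌋)/(s+1)⌋ + 1}^{⌊(n−⌊xn⌋)/s⌋} F( i/(n−⌊xn⌋) ) = (1−x) · ∫_{1/(s+1)}^{1/s} F(t) dt. -/
/-!
On a cell `[(i - 1)/m, i/m]` the term `G (i/m) / m` differs from the integral of `G` by at most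
`1/m` times the oscillation of `G` on the cell. For uniformly continuous `G` the Riemann sum over
`i ∈ (⌊a m⌋, ⌊b m⌋]` is therefore close to `∫` over `[⌊a m⌋/m, ⌊b m⌋/m]`, and these endpoints tend
to `a` and `b`. A function continuous on `[a, b]` is made uniformly continuous on `ℝ` by clamping
its argument to `[a, b]`, which does not change the sum or the integral. The theorem is the case
`m = n - ⌊x n⌋`, `a = 1/(s+1)`, `b = 1/s`, using `⌊m / k⌋ = m / k` and `m / n → 1 - x`.
-/

open Filter Real Topology MeasureTheory

lemma abs_mul_sub_integral_le {G : ℝ → ℝ} {u v ε : ℝ} (huv : u ≤ v)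
    (hG : IntervalIntegrable G volume u v)
    (hε : ∀ t ∈ Set.Ioc u v, |G v - G t| ≤ ε) :
    |(v - u) * G v - ∫ t in u..v, G t| ≤ ε * (v - u) := by
  have hconst : (v - u) * G v = ∫ _ in u..v, G v := by
    rw [intervalIntegral.integral_const, smul_eq_mul]
  have hdiff : (∫ _ in u..v, G v) - ∫ t in u..v, G t = ∫ t in u..v, (G v - G t) :=
    (intervalIntegral.integral_sub intervalIntegrable_const hG).symm
  rw [hconst, hdiff, ← abs_of_nonneg (sub_nonneg.2 huv), ← Real.norm_eq_abs]
  refine intervalIntegral.norm_integral_le_of_norm_le_const fun t ht => ?_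
  rw [Set.uIoc_of_le huv] at ht
  exact hε t ht

lemma abs_riemannSum_sub_integral_le {G : ℝ → ℝ} (hG : Continuous G) {m : ℕ} {ε : ℝ}
    (hε : ∀ t u, |t - u| ≤ 1 / (m : ℝ) → |G t - G u| ≤ ε) {A B : ℕ} (hAB : A ≤ B) :
    |1 / (m : ℝ) * ∑ i ∈ Finset.Ioc A B, G (i / m) - ∫ t in (A / m : ℝ)..(B / m), G t|
      ≤ ε * (((B : ℝ) - A) / m) := by
  induction B, hAB using Nat.le_induction with
  | base => simp
  | succ B hAB ih =>
    have hcell : |((B + 1) / m - B / m) * G ((B + 1) / m)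
        - ∫ t in (B / m : ℝ)..((B + 1) / m), G t| ≤ ε * ((B + 1) / m - B / m) := by
      refine abs_mul_sub_integral_le (by gcongr; linarith) (hG.intervalIntegrable _ _)
        fun t ht => hε _ _ ?_
      rw [abs_of_nonneg (by linarith [ht.2])]
      linarith [ht.1, show ((B : ℝ) + 1) / m = B / m + 1 / m by ring]
    rw [Finset.sum_Ioc_succ_top hAB, ← intervalIntegral.integral_add_adjacent_intervals
      (hG.intervalIntegrable _ (B / m)) (hG.intervalIntegrable _ _)]
    push_cast
    calc _ = |(1 / (m : ℝ) * ∑ i ∈ Finset.Ioc A B, G (i / m)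
              - ∫ t in (A / m : ℝ)..(B / m), G t)
            + (((B + 1) / m - B / m) * G ((B + 1) / m)
              - ∫ t in (B / m : ℝ)..((B + 1) / m), G t)| := by ring_nf
      _ ≤ ε * ((B - A) / m) + ε * ((B + 1) / m - B / m) :=
          (abs_add_le _ _).trans (add_le_add ih hcell)
      _ = ε * ((B + 1 - A) / m) := by ring

lemma Continuous.tendsto_intervalIntegral {α E : Type*} [NormedAddCommGroup E] [NormedSpace ℝ E]
    {l : Filter α} {G : ℝ → E} (hG : Continuous G) {u v : α → ℝ} {a b : ℝ}
    (hu : Tendsto u l (𝓝 a)) (hv : Tendsto v l (𝓝 b)) :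
    Tendsto (fun i => ∫ t in u i..v i, G t) l (𝓝 (∫ t in a..b, G t)) := by
  have hprim := intervalIntegral.continuous_primitive (μ := volume)
    (fun c d => hG.intervalIntegrable c d) 0
  have hsplit : ∀ c d, ∫ t in c..d, G t = (∫ t in (0 : ℝ)..d, G t) - ∫ t in (0 : ℝ)..c, G t :=
    fun c d => (intervalIntegral.integral_interval_sub_left
      (hG.intervalIntegrable _ _) (hG.intervalIntegrable _ _)).symm
  rw [hsplit a b]
  simp_rw [hsplit (u _) (v _)]
  exact ((hprim.tendsto b).comp hv).sub ((hprim.tendsto a).comp hu)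

lemma natFloor_mul_div_le {b : ℝ} (hb : 0 ≤ b) (m : ℕ) : (⌊b * m⌋₊ : ℝ) / m ≤ b :=
  div_le_of_le_mul₀ m.cast_nonneg hb (Nat.floor_le (by positivity))

theorem UniformContinuous.tendsto_riemannSum {G : ℝ → ℝ} (hG : UniformContinuous G) {a b : ℝ}
    (ha : 0 ≤ a) (hab : a ≤ b) :
    Tendsto (fun m : ℕ => 1 / (m : ℝ) * ∑ i ∈ Finset.Ioc ⌊a * m⌋₊ ⌊b * m⌋₊, G (i / m)) atTop
      (𝓝 (∫ t in a..b, G t)) := by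
  have hb : 0 ≤ b := ha.trans hab
  have hend : Tendsto (fun m : ℕ => ∫ t in (⌊a * m⌋₊ / m : ℝ)..(⌊b * m⌋₊ / m), G t) atTop
      (𝓝 (∫ t in a..b, G t)) :=
    hG.continuous.tendsto_intervalIntegral
      ((tendsto_nat_floor_mul_div_atTop ha).comp tendsto_natCast_atTop_atTop)
      ((tendsto_nat_floor_mul_div_atTop hb).comp tendsto_natCast_atTop_atTop)
  have herr : Tendsto (fun m : ℕ => 1 / (m : ℝ) * ∑ i ∈ Finset.Ioc ⌊a * m⌋₊ ⌊b * m⌋₊, G (i / m)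
      - ∫ t in (⌊a * m⌋₊ / m : ℝ)..(⌊b * m⌋₊ / m), G t) atTop (𝓝 0) := by
    rw [Metric.tendsto_nhds]
    intro ε hε
    obtain ⟨δ, hδ, hGδ⟩ := Metric.uniformContinuous_iff.1 hG (ε / (b + 1)) (by positivity)
    filter_upwards [tendsto_one_div_atTop_nhds_zero_nat.eventually (gt_mem_nhds hδ)] with m hm
    have hAB : ⌊a * m⌋₊ ≤ ⌊b * m⌋₊ := Nat.floor_le_floor (by gcongr)
    have hest := abs_riemannSum_sub_integral_le hG.continuous
      (fun t u htu => (hGδ (htu.trans_lt hm)).le) hAB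
    have hlen : ((⌊b * m⌋₊ : ℝ) - ⌊a * m⌋₊) / m ≤ b :=
      (div_le_div_of_nonneg_right (sub_le_self _ (Nat.cast_nonneg _)) m.cast_nonneg).trans
        (natFloor_mul_div_le hb m)
    rw [Real.dist_eq, sub_zero]
    calc _ ≤ ε / (b + 1) * (((⌊b * m⌋₊ : ℝ) - ⌊a * m⌋₊) / m) := hest
      _ ≤ ε / (b + 1) * b := by gcongr
      _ < ε := by rw [div_mul_eq_mul_div, div_lt_iff₀ (by positivity)]; nlinarith
  simpa using herr.add hend

lemma natCast_div_mem_Icc_of_mem_Ioc_floor {a b : ℝ} (hb : 0 ≤ b) {m i : ℕ}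
    (hi : i ∈ Finset.Ioc ⌊a * m⌋₊ ⌊b * m⌋₊) : (i : ℝ) / m ∈ Set.Icc a b := by
  rcases m.eq_zero_or_pos with rfl | hm
  · simp at hi
  have hm' : (0 : ℝ) < m := Nat.cast_pos.2 hm
  rw [Finset.mem_Ioc] at hi
  exact ⟨(le_div_iff₀ hm').2 (Nat.lt_of_floor_lt hi.1).le,
    (div_le_iff₀ hm').2 ((Nat.cast_le.2 hi.2).trans (Nat.floor_le (by positivity)))⟩

theorem ContinuousOn.tendsto_riemannSum {G : ℝ → ℝ} {a b : ℝ}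
    (hG : ContinuousOn G (Set.Icc a b)) (ha : 0 ≤ a) (hab : a ≤ b) :
    Tendsto (fun m : ℕ => 1 / (m : ℝ) * ∑ i ∈ Finset.Ioc ⌊a * m⌋₊ ⌊b * m⌋₊, G (i / m)) atTop
      (𝓝 (∫ t in a..b, G t)) := by
  set H := Set.IccExtend hab ((Set.Icc a b).domRestrict G)
  have hH : UniformContinuous H :=
    (CompactSpace.uniformContinuous_of_continuous hG.domRestrict).comp
      (LipschitzWith.projIcc hab).uniformContinuous
  have hHG : Set.EqOn H G (Set.Icc a b) := fun t ht => Set.IccExtend_of_mem hab _ ht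
  have hint : ∫ t in a..b, H t = ∫ t in a..b, G t :=
    intervalIntegral.integral_congr (by rwa [Set.uIcc_of_le hab])
  rw [← hint]
  refine (hH.tendsto_riemannSum ha hab).congr fun m => ?_
  congr 1
  exact Finset.sum_congr rfl fun i hi =>
    hHG (natCast_div_mem_Icc_of_mem_Ioc_floor (ha.trans hab) hi)

lemma tendsto_sub_natFloor_mul_div {x : ℝ} (hx0 : 0 ≤ x) (hx1 : x ≤ 1) :
    Tendsto (fun n : ℕ => ((n - ⌊x * n⌋₊ : ℕ) : ℝ) / n) atTop (𝓝 (1 - x)) := by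
  refine (tendsto_const_nhds.sub ((tendsto_nat_floor_mul_div_atTop hx0).comp
    tendsto_natCast_atTop_atTop)).congr' ?_
  filter_upwards [eventually_ne_atTop 0] with n hn
  rw [Nat.cast_sub (Nat.floor_le_of_le (mul_le_of_le_one_left n.cast_nonneg hx1)), sub_div,
    div_self (Nat.cast_ne_zero.2 hn)]
  rfl

lemma tendsto_atTop_of_tendsto_div_natCast {f : ℕ → ℕ} {c : ℝ} (hc : 0 < c)
    (hf : Tendsto (fun n => (f n : ℝ) / n) atTop (𝓝 c)) : Tendsto f atTop atTop := by
  rw [← tendsto_natCast_atTop_iff (R := ℝ)]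
  refine (tendsto_natCast_atTop_atTop.atTop_mul_pos hc hf).congr' ?_
  filter_upwards [eventually_ne_atTop 0] with n hn
  field_simp

lemma natFloor_one_div_mul (k m : ℕ) : ⌊1 / (k : ℝ) * m⌋₊ = m / k := by
  rw [one_div_mul_eq_div, Nat.floor_div_eq_div]

theorem riemann_sum_convergence (s : ℕ) (hs : 0 < s) (x : ℝ)
    (hx : x ∈ Set.Ioo (0 : ℝ) 1) (F : ℝ → ℝ)
    (hF : ContinuousOn F (Set.Icc (1 / ((s : ℝ) + 1)) (1 / (s : ℝ)))) :
    Tendsto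
      (fun n : ℕ =>
        (1 / (n : ℝ)) *
          ∑ i ∈ Finset.Icc ((n - ⌊x * n⌋₊) / (s + 1) + 1) ((n - ⌊x * n⌋₊) / s),
            F ((i : ℝ) / ((n : ℝ) - (⌊x * n⌋₊ : ℝ))))
      atTop
      (𝓝 ((1 - x) * ∫ t in (1 / ((s : ℝ) + 1))..(1 / (s : ℝ)), F t)) := by
  obtain ⟨hx0, hx1⟩ := hx
  have hratio := tendsto_sub_natFloor_mul_div hx0.le hx1.le
  have hm := tendsto_atTop_of_tendsto_div_natCast (sub_pos.2 hx1) hratio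
  have hsum := (hF.tendsto_riemannSum (by positivity)
    (one_div_le_one_div_of_le (by exact_mod_cast hs) (by linarith))).comp hm
  refine (hratio.mul hsum).congr' ?_
  filter_upwards [hm.eventually_gt_atTop 0] with n hn
  have hfloor : ⌊x * n⌋₊ ≤ n :=
    Nat.floor_le_of_le (mul_le_of_le_one_left n.cast_nonneg hx1.le)
  have hs1 := natFloor_one_div_mul (s + 1) (n - ⌊x * n⌋₊)
  push_cast at hs1
  simp only [Function.comp_apply, hs1, natFloor_one_div_mul, Finset.Icc_add_one_left_eq_Ioc,
    ← Nat.cast_sub hfloor]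
  field_simp
end
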